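/- If G is a simple graph with n vertices and list chromatic number χ_ℓ, and t is a positive integer dividing χ_ℓ, then χ_ℓ · λ_t(G) ≥ t · n. -/

import Mathlib

/-!
Write `χ = t * s` and let `L` be a `t`-list assignment with `λ_L(G) = λ_t(G)`. Stacking `s`
disjoint copies of `L` gives a `χ`-list assignment, so `G` has a proper coloring from it.
The vertices colored from the `i`-th copy are properly colored from `L`, so each such class has
at most `λ_t(G)` vertices, and the `s` classes cover `G`: `n ≤ s * λ_t(G)`. Multiply by `t`.
-/

open SimpleGraph

/-- `c` properly colors each vertex of `S` from its list `L`. -/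
def IsPartialListColoring {V : Type*} (G : SimpleGraph V) (L : V → Finset ℕ)
    (S : Set V) (c : V → ℕ) : Prop :=
  (∀ v ∈ S, c v ∈ L v) ∧ ∀ u ∈ S, ∀ v ∈ S, G.Adj u v → c u ≠ c v

/-- `λ_L(G)`: the maximum number of vertices properly colorable from the lists of `L`. -/
noncomputable def lamL {V : Type*} (G : SimpleGraph V) (L : V → Finset ℕ) : ℕ :=
  sSup {k | ∃ (S : Finset V) (c : V → ℕ), S.card = k ∧ IsPartialListColoring G L S c}

/-- `λ_t(G)`: the minimum of `λ_L(G)` over all `t`-list assignments `L`. -/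
noncomputable def lam {V : Type*} (G : SimpleGraph V) (t : ℕ) : ℕ :=
  sInf {m | ∃ L : V → Finset ℕ, (∀ v, (L v).card = t) ∧ lamL G L = m}

/-- `G` admits a full proper coloring from the lists of `L`. -/
def ListColorable {V : Type*} (G : SimpleGraph V) (L : V → Finset ℕ) : Prop :=
  ∃ c : V → ℕ, (∀ v, c v ∈ L v) ∧ ∀ u v, G.Adj u v → c u ≠ c v

/-- The list chromatic number of `G`. -/
noncomputable def listChromaticNumber {V : Type*} (G : SimpleGraph V) : ℕ :=
  sInf {k | ∀ L : V → Finset ℕ, (∀ v, (L v).card = k) → ListColorable G L}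

open Finset

section

variable {V : Type*} {G : SimpleGraph V}

theorem ListColorable.mono {L L' : V → Finset ℕ} (hLL' : ∀ v, L v ⊆ L' v)
    (hL : ListColorable G L) : ListColorable G L' :=
  let ⟨c, hcL, hc⟩ := hL
  ⟨c, fun v => hLL' v (hcL v), hc⟩

theorem listColorable_of_card_le_card [Fintype V] (L : V → Finset ℕ)
    (hL : ∀ v, Fintype.card V ≤ (L v).card) : ListColorable G L := by
  classical
  have hall : ∀ s : Finset V, s.card ≤ (s.biUnion L).card := by
    intro s
    rcases s.eq_empty_or_nonempty with rfl | ⟨v, hv⟩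
    · simp
    · calc s.card ≤ Fintype.card V := card_le_univ s
        _ ≤ (L v).card := hL v
        _ ≤ (s.biUnion L).card := card_le_card (subset_biUnion_of_mem L hv)
  obtain ⟨c, hinj, hcL⟩ := (all_card_le_biUnion_card_iff_exists_injective L).mp hall
  exact ⟨c, hcL, fun u v huv hc => G.ne_of_adj huv (hinj hc)⟩

theorem listColorable_of_listChromaticNumber_le [Fintype V] (L : V → Finset ℕ)
    (hL : ∀ v, listChromaticNumber G ≤ (L v).card) : ListColorable G L := by
  have hχ : listChromaticNumber G ∈
      {k | ∀ L : V → Finset ℕ, (∀ v, (L v).card = k) → ListColorable G L} :=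
    Nat.sInf_mem ⟨Fintype.card V, fun L hL =>
      listColorable_of_card_le_card L fun v => (hL v).ge⟩
  choose L₀ hL₀L hL₀ using fun v => exists_subset_card_eq (hL v)
  exact (hχ L₀ hL₀).mono hL₀L

theorem card_le_lamL [Fintype V] {L : V → Finset ℕ} {S : Finset V} {c : V → ℕ}
    (hc : IsPartialListColoring G L S c) : S.card ≤ lamL G L :=
  le_csSup ⟨Fintype.card V, by rintro _ ⟨T, -, rfl, -⟩; exact card_le_univ T⟩
    ⟨S, c, rfl, hc⟩

theorem exists_lamL_eq_lam (G : SimpleGraph V) (t : ℕ) :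
    ∃ L : V → Finset ℕ, (∀ v, (L v).card = t) ∧ lamL G L = lam G t :=
  Nat.sInf_mem (s := {m | ∃ L : V → Finset ℕ, (∀ v, (L v).card = t) ∧ lamL G L = m})
    ⟨_, fun _ => range t, fun _ => card_range t, rfl⟩

def listCopies (L : V → Finset ℕ) (s : ℕ) (v : V) : Finset ℕ :=
  (range s ×ˢ L v).map Nat.pairEquiv.toEmbedding

theorem card_listCopies (L : V → Finset ℕ) (s : ℕ) (v : V) :
    (listCopies L s v).card = s * (L v).card := by
  rw [listCopies, card_map, card_product, card_range]

theorem mem_listCopies {L : V → Finset ℕ} {s : ℕ} {v : V} {x : ℕ} :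
    x ∈ listCopies L s v ↔ (Nat.unpair x).1 < s ∧ (Nat.unpair x).2 ∈ L v := by
  rw [listCopies, mem_map_equiv, mem_product, mem_range]
  rfl

theorem card_le_mul_lamL_of_listColorable_listCopies [Fintype V] {L : V → Finset ℕ} {s : ℕ}
    (h : ListColorable G (listCopies L s)) : Fintype.card V ≤ s * lamL G L := by
  classical
  obtain ⟨c, hcL, hc⟩ := h
  have hcopy : ∀ v, (c v).unpair.1 < s ∧ (c v).unpair.2 ∈ L v :=
    fun v => mem_listCopies.mp (hcL v)
  have hclass : ∀ i, IsPartialListColoring G L ↑({v | (c v).unpair.1 = i} : Finset V)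
      (fun v => (c v).unpair.2) := by
    refine fun i => ⟨fun v _ => (hcopy v).2, fun u hu v hv huv hcuv => hc u v huv ?_⟩
    simp only [coe_filter, mem_univ, true_and, Set.mem_ofPred_eq] at hu hv
    exact Nat.pairEquiv.symm.injective (Prod.ext (hu.trans hv.symm) hcuv)
  rw [mul_comm, ← card_range s]
  exact card_le_mul_card_image_of_maps_to (fun v _ => mem_range.mpr (hcopy v).1) _
    fun i _ => card_le_lamL (hclass i)

end

theorem agh_conjecture_of_dvd_general {V : Type*} [Fintype V] (G : SimpleGraph V)
    (χ t : ℕ) (hχ : listChromaticNumber G = χ) (hdvd : t ∣ χ) :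
    t * Fintype.card V ≤ χ * lam G t := by
  obtain ⟨s, rfl⟩ := hdvd
  obtain ⟨L, hLt, hLlam⟩ := exists_lamL_eq_lam G t
  have hcopies : ListColorable G (listCopies L s) :=
    listColorable_of_listChromaticNumber_le _ fun v => by rw [card_listCopies, hLt, hχ, mul_comm]
  calc t * Fintype.card V ≤ t * (s * lamL G L) :=
        Nat.mul_le_mul_left t (card_le_mul_lamL_of_listColorable_listCopies hcopies)
    _ = t * s * lam G t := by rw [hLlam, mul_assoc]

theorem agh_conjecture_of_dvd {V : Type*} [Fintype V] (G : SimpleGraph V)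
    (χ t : ℕ) (hχ : listChromaticNumber G = χ) (ht : 0 < t) (hdvd : t ∣ χ) :
    t * Fintype.card V ≤ χ * lam G t :=
  agh_conjecture_of_dvd_general G χ t hχ hdvd
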